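/- The graph G constructed from p blocks of (k−1,τ)-Ramsey graphs (ring-of-blocks construction) is k-claw-free: it contains no induced K_{1,k}. -/

import Mathlib

open Finset

variable {V : Type*}

/-- `s` is an independent set of `G`. -/
def IsIndep (G : SimpleGraph V) (s : Finset V) : Prop :=
  ∀ u ∈ s, ∀ w ∈ s, u ≠ w → ¬ G.Adj u w

/-- The independence number `α(G)`. -/
noncomputable def indepNum [Fintype V] (G : SimpleGraph V) : ℕ :=
  sSup {n | ∃ s : Finset V, s.card = n ∧ IsIndep G s}

/-- The clique number `ω(G)`. -/
noncomputable def cliqueNum [Fintype V] (G : SimpleGraph V) : ℕ :=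
  sSup {n | ∃ s : Finset V, s.card = n ∧ G.IsClique ↑s}

/-- A graph is `k`-claw-free if it contains no induced `K_{1,k}`. -/
def IsClawFree (k : ℕ) (G : SimpleGraph V) : Prop :=
  ¬ ∃ (v : V) (s : Finset V), s.card = k ∧ (∀ u ∈ s, G.Adj v u) ∧
      ∀ u ∈ s, ∀ w ∈ s, u ≠ w → ¬ G.Adj u w

/-- Vertices of the auxiliary graph `G'`: block index `i : ZMod p` together with a
vertex of the copy `H¹_i` of `H`, a vertex of the copy `H²_i` of `H`, or a vertex of
the clique `Q_i = K_{τ-1}`. -/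
abbrev RingVert (V : Type*) (p τ : ℕ) := ZMod p × (V ⊕ V ⊕ Fin (τ - 1))

/-- Matching edges of `G'`: in block `i`, either the matching edge joining `v ∈ H¹_i`
to its copy in `H²_i`, or the matching edge joining the `j`-th matched vertex of
`H²_i` to the `j`-th vertex of `Q_i`, or the matching edge joining the `j`-th vertex
of `Q_i` to the `j`-th matched vertex of `H¹_{i+1}`. -/
abbrev RingEdge (V : Type*) (p τ : ℕ) := ZMod p × (V ⊕ Fin (τ - 1) ⊕ Fin (τ - 1))

/-- The non-matching edges of `G'`: edges inside each copy `H¹_i` and `H²_i` of `H`,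
and all edges inside each clique `Q_i`. -/
def ringBase (H : SimpleGraph V) (p τ : ℕ) : SimpleGraph (RingVert V p τ) :=
  SimpleGraph.fromRel (fun x y =>
    x.1 = y.1 ∧
      (match x.2, y.2 with
        | Sum.inl a, Sum.inl b => H.Adj a b
        | Sum.inr (Sum.inl a), Sum.inr (Sum.inl b) => H.Adj a b
        | Sum.inr (Sum.inr _), Sum.inr (Sum.inr _) => True
        | _, _ => False))

/-- The two endpoints in `G'` of a matching edge, where `f i : Fin (τ-1) ↪ V`
selects the `τ-1` vertices of `H²_i` matched to `Q_i`, and `g i : Fin (τ-1) ↪ V`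
selects the `τ-1` vertices of `H¹_i` matched to `Q_{i-1}`. -/
def ringEnds (p τ : ℕ) (f g : ZMod p → Fin (τ - 1) ↪ V) :
    RingEdge V p τ → Set (RingVert V p τ)
  | (i, Sum.inl v) => {(i, Sum.inl v), (i, Sum.inr (Sum.inl v))}
  | (i, Sum.inr (Sum.inl j)) => {(i, Sum.inr (Sum.inl (f i j))), (i, Sum.inr (Sum.inr j))}
  | (i, Sum.inr (Sum.inr j)) => {(i, Sum.inr (Sum.inr j)), (i + 1, Sum.inl (g (i + 1) j))}

/-- The graph `G` of the ring-of-blocks construction: one vertex per matching edge of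
`G'`, two vertices adjacent iff the corresponding matching edges do not form an
induced matching in `G'` (they share an endpoint or some edge of `G'` joins their
endpoint sets). -/
def ringGraph (H : SimpleGraph V) (p τ : ℕ) (f g : ZMod p → Fin (τ - 1) ↪ V) :
    SimpleGraph (RingEdge V p τ) :=
  SimpleGraph.fromRel (fun e e' =>
    ∃ x ∈ ringEnds p τ f g e, ∃ y ∈ ringEnds p τ f g e',
      x = y ∨ (ringBase H p τ).Adj x y)

/-!
A vertex of `G` is a matching edge of `G'`, and it is adjacent only to matching edges that
meet one of its two parts (a copy of `H` or a clique `Q_i`). Pairwise non-adjacent matching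
edges have pairwise distinct and non-adjacent endpoints in any one part, so at most `α(H)` of
the leaves of a claw meet a given copy of `H` and at most one meets a given clique. Every
neighbourhood is covered by one copy and one clique: for the centre `H¹_i – H²_i` this uses
that a matching edge meeting `H²_i` meets `H¹_i` or `Q_i`. Hence a claw has at most
`α(H) + 1 ≤ k - 1` leaves.
-/

lemma IsIndep.mono {W : Type*} {K : SimpleGraph W} {s t : Finset W} (hs : IsIndep K s)
    (hts : t ⊆ s) : IsIndep K t :=
  fun u hu w hw => hs u (hts hu) w (hts hw)

lemma IsIndep.card_le_one_of_top {W : Type*} {t : Finset W}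
    (ht : IsIndep (⊤ : SimpleGraph W) t) : t.card ≤ 1 :=
  Finset.card_le_one.mpr fun u hu w hw => by_contra fun huw => ht u hu w hw huw huw

lemma card_le_indepNum [Fintype V] {H : SimpleGraph V} {t : Finset V} (ht : IsIndep H t) :
    t.card ≤ indepNum H :=
  le_csSup ⟨Fintype.card V, fun _ ⟨s, hs, _⟩ => hs ▸ s.card_le_univ⟩ ⟨t, rfl, ht⟩

section RingGraph

variable {p τ : ℕ} {H : SimpleGraph V} {f g : ZMod p → Fin (τ - 1) ↪ V}

lemma ringBase_adj {x y : RingVert V p τ} :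
    (ringBase H p τ).Adj x y ↔ x ≠ y ∧ x.1 = y.1 ∧
      (match x.2, y.2 with
        | Sum.inl a, Sum.inl b => H.Adj a b
        | Sum.inr (Sum.inl a), Sum.inr (Sum.inl b) => H.Adj a b
        | Sum.inr (Sum.inr _), Sum.inr (Sum.inr _) => True
        | _, _ => False) := by
  obtain ⟨i, a⟩ := x; obtain ⟨j, b⟩ := y
  rw [ringBase, SimpleGraph.fromRel_adj]
  rcases a with a | a | a <;> rcases b with b | b | b <;>
    simp [eq_comm, H.adj_comm]

lemma ringGraph_adj {e e' : RingEdge V p τ} :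
    (ringGraph H p τ f g).Adj e e' ↔ e ≠ e' ∧
      ∃ x ∈ ringEnds p τ f g e, ∃ y ∈ ringEnds p τ f g e',
        x = y ∨ (ringBase H p τ).Adj x y := by
  rw [ringGraph, SimpleGraph.fromRel_adj]
  refine and_congr_right fun _ => ⟨?_, Or.inl⟩
  rintro (h | ⟨x, hx, y, hy, rfl | h⟩)
  · exact h
  · exact ⟨x, hy, x, hx, Or.inl rfl⟩
  · exact ⟨y, hy, x, hx, Or.inr h.symm⟩

lemma ringBase_adj_inl (i : ZMod p) {a b : V} (h : H.Adj a b) :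
    (ringBase H p τ).Adj (i, Sum.inl a) (i, Sum.inl b) :=
  ringBase_adj.mpr ⟨by simp [h.ne], rfl, h⟩

lemma ringBase_adj_inr_inl (i : ZMod p) {a b : V} (h : H.Adj a b) :
    (ringBase H p τ).Adj (i, Sum.inr (Sum.inl a)) (i, Sum.inr (Sum.inl b)) :=
  ringBase_adj.mpr ⟨by simp [h.ne], rfl, h⟩

lemma IsIndep.exists_isIndep_card_eq {s : Finset (RingEdge V p τ)}
    (hs : IsIndep (ringGraph H p τ f g) s) {W : Type*} (K : SimpleGraph W)
    (φ : W → RingVert V p τ) (hφ : ∀ ⦃a b⦄, K.Adj a b → (ringBase H p τ).Adj (φ a) (φ b))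
    (hmeet : ∀ e ∈ s, ∃ a, φ a ∈ ringEnds p τ f g e) :
    ∃ t : Finset W, IsIndep K t ∧ t.card = s.card := by
  classical
  obtain rfl | ⟨e₀, he₀⟩ := s.eq_empty_or_nonempty
  · exact ⟨∅, fun _ h => absurd h (notMem_empty _), rfl⟩
  have : Nonempty W := ⟨(hmeet e₀ he₀).choose⟩
  choose! a ha using hmeet
  have hinj : Set.InjOn a s := fun e he e' he' hee' => by
    by_contra hne
    exact hs e he e' he' hne
      (ringGraph_adj.mpr ⟨hne, _, ha e he, _, ha e' he', Or.inl (by rw [hee'])⟩)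
  refine ⟨s.image a, ?_, card_image_of_injOn hinj⟩
  simp only [IsIndep, mem_image]
  rintro _ ⟨e, he, rfl⟩ _ ⟨e', he', rfl⟩ hne hadj
  exact hs e he e' he' (fun h => hne (congrArg a h))
    (ringGraph_adj.mpr ⟨fun h => hne (congrArg a h), _, ha e he, _, ha e' he', Or.inr (hφ hadj)⟩)

lemma IsIndep.card_le_indepNum_add_one [Fintype V] {s : Finset (RingEdge V p τ)}
    (hs : IsIndep (ringGraph H p τ f g) s) (φ : V → RingVert V p τ)
    (hφ : ∀ ⦃a b⦄, H.Adj a b → (ringBase H p τ).Adj (φ a) (φ b)) (i : ZMod p)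
    (hcover : ∀ e ∈ s, (∃ a, φ a ∈ ringEnds p τ f g e) ∨
      ∃ j, (i, Sum.inr (Sum.inr j)) ∈ ringEnds p τ f g e) :
    s.card ≤ indepNum H + 1 := by
  classical
  set meetsCopy := fun e => ∃ a, φ a ∈ ringEnds p τ f g e
  obtain ⟨t, ht, htcard⟩ := (hs.mono (filter_subset meetsCopy s)).exists_isIndep_card_eq H φ hφ
    fun e he => (mem_filter.mp he).2
  obtain ⟨q, hq, hqcard⟩ :=
    (hs.mono (filter_subset (fun e => ¬ meetsCopy e) s)).exists_isIndep_card_eq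
      (⊤ : SimpleGraph (Fin (τ - 1))) (fun j => (i, Sum.inr (Sum.inr j)))
      (fun a b hab => ringBase_adj.mpr ⟨by simpa using hab, rfl, trivial⟩)
      fun e he => (hcover e (mem_filter.mp he).1).resolve_left (mem_filter.mp he).2
  rw [← card_filter_add_card_filter_not meetsCopy, ← htcard, ← hqcard]
  exact add_le_add (card_le_indepNum ht) hq.card_le_one_of_top

lemma exists_copy_clique_cover (e₀ : RingEdge V p τ) :
    ∃ φ : V → RingVert V p τ, (∀ ⦃a b⦄, H.Adj a b → (ringBase H p τ).Adj (φ a) (φ b)) ∧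
      ∃ i, ∀ e, (ringGraph H p τ f g).Adj e₀ e → (∃ a, φ a ∈ ringEnds p τ f g e) ∨
        ∃ j, (i, Sum.inr (Sum.inr j)) ∈ ringEnds p τ f g e := by
  obtain ⟨i, v | m | m⟩ := e₀ <;>
    [refine ⟨_, fun _ _ => ringBase_adj_inl i, i, ?_⟩;
     refine ⟨_, fun _ _ => ringBase_adj_inr_inl i, i, ?_⟩;
     refine ⟨_, fun _ _ => ringBase_adj_inl (i + 1), i, ?_⟩]
  all_goals
    rintro ⟨j, w | n | n⟩ h <;> obtain ⟨-, x, hx, y, hy, hxy⟩ := ringGraph_adj.mp h <;>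
      simp only [ringEnds, Set.mem_insert_iff, Set.mem_singleton_iff] at hx hy ⊢ <;>
      rcases hx with rfl | rfl <;> rcases hy with rfl | rfl <;>
      simp_all [ringBase_adj] <;> tauto

end RingGraph

theorem ring_clawFree_general [Fintype V] (H : SimpleGraph V)
    (k p τ : ℕ) (hk : 4 ≤ k)
    (hα : indepNum H ≤ k - 2)
    (f g : ZMod p → Fin (τ - 1) ↪ V) :
    IsClawFree k (ringGraph H p τ f g) := by
  rintro ⟨e₀, s, hcard, hadj, hs⟩
  obtain ⟨φ, hφ, i, hcover⟩ := exists_copy_clique_cover (H := H) (f := f) (g := g) e₀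
  have := IsIndep.card_le_indepNum_add_one hs φ hφ i fun e he => hcover e (hadj e he)
  omega

/-- The ring-of-blocks graph `G` built from `p` blocks of a `(k−1,τ)`-Ramsey graph
`H` (so `α(H) ≤ k−2` and `ω(H) ≤ τ−1`) is `k`-claw-free. -/
theorem ring_clawFree [Fintype V] [DecidableEq V] (H : SimpleGraph V)
    (k p τ : ℕ) [NeZero p] (hk : 4 ≤ k) (hτ : 3 ≤ τ)
    (hα : indepNum H ≤ k - 2) (hω : cliqueNum H ≤ τ - 1)
    (f g : ZMod p → Fin (τ - 1) ↪ V) :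
    IsClawFree k (ringGraph H p τ f g) :=
  ring_clawFree_general H k p τ hk hα f g
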